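/- Under the hypotheses 1+η₀+η₁ > 0, u₀+u₁ ≥ 2α > 0 and 1+η₀+η₁ ≤ (u₀+u₁-α)(u₀+u₁-2α/3), for all real θ, ξ with |ξ| ≤ α one has ½(u₀+u₁)θ² + ½(u₀+u₁)(1+η₀+η₁)ξ² + (1+η₀+η₁)ξθ - ½ξθ² - ⅓(1+η₀+η₁)ξ³ ≥ 0. -/
import Mathlib

theorem stmt7 (u₀ u₁ η₀ η₁ α θ ξ : ℝ) (hα : 0 < α)
    (h1 : 0 < 1 + η₀ + η₁) (h2 : u₀ + u₁ ≥ 2 * α)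
    (h3 : 1 + η₀ + η₁ ≤ (u₀ + u₁ - α) * (u₀ + u₁ - 2 * α / 3))
    (hξ : |ξ| ≤ α) :
    0 ≤ (1/2) * (u₀ + u₁) * θ^2 + (1/2) * (u₀ + u₁) * (1 + η₀ + η₁) * ξ^2
      + (1 + η₀ + η₁) * ξ * θ - (1/2) * ξ * θ^2 - (1/3) * (1 + η₀ + η₁) * ξ^3 := by
  obtain ⟨hξ1, hξ2⟩ := abs_le.mp hξ
  set s := u₀ + u₁ with hs
  set E := 1 + η₀ + η₁ with hE
  have hsξ : 0 < s - ξ := by linarith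
  have hmin : (s - α) * (s - 2 * α / 3) ≤ (s - ξ) * (s - 2 * ξ / 3) := by nlinarith
  have hdisc : E ≤ (s - ξ) * (s - 2 * ξ / 3) := le_trans h3 hmin
  have key : 0 ≤ ((s - ξ) * θ + E * ξ)^2 + E * ξ^2 * ((s - ξ) * (s - 2 * ξ / 3) - E) := by
    have := sq_nonneg ((s - ξ) * θ + E * ξ)
    nlinarith [mul_nonneg (mul_nonneg h1.le (sq_nonneg ξ)) (sub_nonneg.mpr hdisc)]
  nlinarith [mul_pos hsξ hsξ]
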